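/- Let K be an algebraically closed field, d ≥ 3, and suppose bl_1 + ... + bl_m = x1 + ... + xm, where each bl_i is a product of d linear forms and the x_i are pairwise coprime squarefree monomials of degree d. If property C^d_{m-1} holds (for any identity Σ bl_i = Σ f_j·x_j with m-1 products on the left and pairwise degree sums of the monomials at least d+2, some f_j vanishes), then there is a permutation σ of {1,...,m} with bl_i = x_{σ(i)} for all i. -/

import Mathlib

open MvPolynomial

/-- `p` is a product of `d` linear forms (each possibly zero). -/
def ProdLinear {K σ : Type*} [CommRing K] (d : ℕ) (p : MvPolynomial σ K) : Prop :=
  ∃ l : Fin d → MvPolynomial σ K, (∀ j, (l j).IsHomogeneous 1) ∧ p = ∏ j, l j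

/-- Property `C^d_m`: for any equation `bl₁ + ⋯ + bl_m = ∑_{i=0}^m f_i·x_i` with the `x_i`
pairwise coprime squarefree monomials whose degrees pairwise sum to at least `d+2`,
the `bl_i` degree-`d` products of linear forms, and the `f_i` products of linear forms of
degree `d - deg x_i`, some `f_i` vanishes. -/
def PropC (σ K : Type*) [Field K] (d m : ℕ) : Prop :=
  ∀ S : Fin (m + 1) → Finset σ, Pairwise (Function.onFun Disjoint S) →
    (∀ i, (S i).card ≤ d) →
    (∀ i j, i ≠ j → d + 2 ≤ (S i).card + (S j).card) →
    ∀ bl : Fin m → MvPolynomial σ K, (∀ i, ProdLinear d (bl i)) →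
    ∀ f : Fin (m + 1) → MvPolynomial σ K, (∀ i, ProdLinear (d - (S i).card) (f i)) →
    (∑ i, bl i) = (∑ i, f i * ∏ x ∈ S i, X x) →
    ∃ i, f i = 0

/-!
Every linear factor `l` of some `bl i₀` is a multiple of a variable: pick a variable `X y`
occurring in `l` with coefficient `c ≠ 0` and substitute `X y ↦ X y - c⁻¹ l`: this kills
`bl i₀`, keeps the other `bl i` products of linear forms, and turns the monomial `x_j`
containing `y` into `(X y - c⁻¹ l) · x_j / X y`. The result is an identity with `m - 1`
products on the left to which `C^d_{m-1}` applies (with `d - 1 + d ≥ d + 2` as `d ≥ 3`), so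
`X y - c⁻¹ l = 0`. Hence every `bl i` is a monomial, and comparing coefficients with the sum of
the distinct monomials `x_j` matches them up.
-/

open Function

theorem Finsupp.exists_eq_single_of_degree_eq_one {σ : Type*} {m : σ →₀ ℕ} (h : m.degree = 1) :
    ∃ z, m = Finsupp.single z 1 := by
  classical
  obtain ⟨z, hz⟩ := Multiset.card_eq_one.mp ((Finsupp.card_toMultiset m).trans h)
  exact ⟨z, (Multiset.toFinsupp_eq_iff.mpr hz.symm).symm.trans (Multiset.toFinsupp_singleton z)⟩

theorem Finsupp.sum_single_one_injective {σ : Type*} :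
    Injective fun s : Finset σ => ∑ z ∈ s, Finsupp.single z 1 := by
  intro s t h
  simpa using congrArg Finsupp.toMultiset h

namespace MvPolynomial

variable {R σ : Type*} [CommSemiring R]

theorem IsHomogeneous.exists_eq_single_of_mem_support {p : MvPolynomial σ R}
    (hp : p.IsHomogeneous 1) {m : σ →₀ ℕ} (hm : m ∈ p.support) : ∃ z, m = Finsupp.single z 1 :=
  Finsupp.exists_eq_single_of_degree_eq_one <| by
    rw [Finsupp.degree_eq_weight_one]; exact hp (mem_support_iff.mp hm)

theorem IsHomogeneous.coeff_single_ne_zero_of_mem_vars {p : MvPolynomial σ R}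
    (hp : p.IsHomogeneous 1) {i : σ} (hi : i ∈ p.vars) : coeff (Finsupp.single i 1) p ≠ 0 := by
  obtain ⟨m, hm, him⟩ := (mem_vars_iff_mem_support i).mp hi
  obtain ⟨z, rfl⟩ := hp.exists_eq_single_of_mem_support hm
  obtain rfl : i = z := by simpa using him
  exact mem_support_iff.mp hm

theorem IsHomogeneous.exists_coeff_single_ne_zero {p : MvPolynomial σ R}
    (hp : p.IsHomogeneous 1) (h0 : p ≠ 0) : ∃ y, coeff (Finsupp.single y 1) p ≠ 0 := by
  obtain ⟨m, hm⟩ := support_nonempty.mpr h0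
  obtain ⟨y, rfl⟩ := hp.exists_eq_single_of_mem_support hm
  exact ⟨y, mem_support_iff.mp hm⟩

theorem aeval_eq_self_of_vars {g : σ → MvPolynomial σ R} {p : MvPolynomial σ R}
    (h : ∀ i ∈ p.vars, g i = X i) : aeval g p = p :=
  (eval₂Hom_congr' rfl (fun i hi _ => h i hi) rfl).trans (aeval_X_left_apply p)

theorem prod_X_eq_monomial (s : Finset σ) :
    ∏ x ∈ s, (X x : MvPolynomial σ R) = monomial (∑ x ∈ s, Finsupp.single x 1) 1 := by
  rw [monomial_sum_one]; rfl

theorem exists_prod_eq_monomial {ι : Type*} (s : Finset ι) {f : ι → MvPolynomial σ R}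
    (hf : ∀ i ∈ s, ∃ D a, f i = monomial D a) : ∃ D a, ∏ i ∈ s, f i = monomial D a := by
  classical
  induction s using Finset.induction_on with
  | empty => exact ⟨0, 1, by simp⟩
  | insert i s hi ih =>
    obtain ⟨D, a, hD⟩ := hf i (s.mem_insert_self i)
    obtain ⟨D', a', hD'⟩ := ih fun j hj => hf j (Finset.mem_insert_of_mem hj)
    exact ⟨D + D', a * a', by rw [Finset.prod_insert hi, hD, hD', monomial_mul]⟩

theorem aeval_prod_X_eq_mulSingle_mul {ι : Type*} [DecidableEq ι] [DecidableEq σ]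
    {S : ι → Finset σ} (hdisj : Pairwise (onFun Disjoint S)) {y : σ} {j₀ : ι} (hy : y ∈ S j₀)
    {g : σ → MvPolynomial σ R} (hg : ∀ z, z ≠ y → g z = X z) (j : ι) :
    aeval g (∏ x ∈ S j, (X x : MvPolynomial σ R)) =
      (Pi.mulSingle j₀ (g y) : ι → MvPolynomial σ R) j *
        ∏ x ∈ update S j₀ ((S j₀).erase y) j, X x := by
  simp only [map_prod, aeval_X]
  by_cases hj : j = j₀
  · subst hj
    rw [← Finset.mul_prod_erase _ _ hy, Pi.mulSingle_eq_same, update_self]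
    exact congrArg _ (Finset.prod_congr rfl fun z hz => hg z (Finset.ne_of_mem_erase hz))
  · rw [Pi.mulSingle_eq_of_ne hj, update_of_ne hj, one_mul]
    exact Finset.prod_congr rfl fun z hz =>
      hg z fun hzy => Finset.disjoint_left.mp (hdisj hj) hz (hzy ▸ hy)

theorem exists_perm_of_sum_eq_sum_monomial_one [Nontrivial R] {ι : Type*} [Fintype ι]
    {p : ι → MvPolynomial σ R} (hp : ∀ i, ∃ D a, p i = monomial D a)
    {E : ι → σ →₀ ℕ} (hE : Injective E) (h : ∑ i, p i = ∑ j, monomial (E j) (1 : R)) :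
    ∃ e : Equiv.Perm ι, ∀ i, p i = monomial (E (e i)) 1 := by
  classical
  choose D a hpD using hp
  simp only [hpD] at h ⊢
  have hcoeff (D₀ : σ →₀ ℕ) : ∑ i, (if D i = D₀ then a i else 0) =
      ∑ j, if E j = D₀ then (1 : R) else 0 := by
    simpa only [coeff_sum, coeff_monomial] using congrArg (coeff D₀) h
  have hτ (j : ι) : ∃ i, D i = E j := by
    have hsum : ∑ i, (if D i = E j then a i else 0) ≠ 0 := by
      simp [hcoeff, hE.eq_iff]
    obtain ⟨i, -, hi⟩ := Finset.exists_ne_zero_of_sum_ne_zero hsum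
    exact ⟨i, by_contra fun hne => hi (if_neg hne)⟩
  choose τ hτ using hτ
  have hτinj : Injective τ := fun j j' h => hE (by rw [← hτ, ← hτ, h])
  let e := (Equiv.ofBijective τ hτinj.bijective_of_finite).symm
  have hDe (i : ι) : D i = E (e i) := by
    rw [← hτ]; exact congrArg D ((Equiv.ofBijective τ _).apply_symm_apply i).symm
  have hDinj : Injective D := fun i i' h => e.injective (hE (by rw [← hDe, ← hDe, h]))
  refine ⟨e, fun i => ?_⟩
  have hai := hcoeff (D i)
  simp only [hDinj.eq_iff, Finset.sum_ite_eq', Finset.mem_univ, if_true] at hai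
  simp only [hDe i, hE.eq_iff, Finset.sum_ite_eq', Finset.mem_univ, if_true] at hai
  rw [hDe i, hai]

end MvPolynomial

theorem ProdLinear.aeval {R σ : Type*} [CommRing R] {d : ℕ} {g : σ → MvPolynomial σ R}
    (hg : ∀ z, (g z).IsHomogeneous 1) {p : MvPolynomial σ R} (hp : ProdLinear d p) :
    ProdLinear d (MvPolynomial.aeval g p) := by
  obtain ⟨l, hl, rfl⟩ := hp
  exact ⟨fun j => MvPolynomial.aeval g (l j), fun j => by simpa using (hl j).aeval g hg,
    map_prod _ _ _⟩

theorem ProdLinear.one {R σ : Type*} [CommRing R] : ProdLinear 0 (1 : MvPolynomial σ R) :=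
  ⟨Fin.elim0, fun j => j.elim0, by simp⟩

theorem ProdLinear.of_isHomogeneous {R σ : Type*} [CommRing R] {p : MvPolynomial σ R}
    (hp : p.IsHomogeneous 1) : ProdLinear 1 p :=
  ⟨fun _ => p, fun _ => hp, by simp⟩

namespace MvPolynomial

variable {K σ : Type*} [Field K]

theorem aeval_update_X_sub_eq_zero [DecidableEq σ] {l : MvPolynomial σ K}
    (hl : l.IsHomogeneous 1) {y : σ} (hy : coeff (Finsupp.single y 1) l ≠ 0) :
    aeval (update X y (X y - C (coeff (Finsupp.single y 1) l)⁻¹ * l)) l = 0 := by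
  set c := coeff (Finsupp.single y 1) l
  set r := l - C c * X y
  have hr : r.IsHomogeneous 1 := hl.sub ((isHomogeneous_X K y).C_mul c)
  have hry : y ∉ r.vars := fun hy' =>
    hr.coeff_single_ne_zero_of_mem_vars hy' (by simp [r, c, coeff_sub, coeff_C_mul])
  have hfix : aeval (update X y (X y - C c⁻¹ * l)) r = r :=
    aeval_eq_self_of_vars fun i hi => update_of_ne (ne_of_mem_of_not_mem hi hry) _ _
  calc aeval (update X y (X y - C c⁻¹ * l)) l
      = aeval (update X y (X y - C c⁻¹ * l)) (r + C c * X y) := by rw [sub_add_cancel]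
    _ = r + C c * (X y - C c⁻¹ * l) := by rw [map_add, hfix, map_mul, aeval_C, aeval_X,
          update_self, algebraMap_eq]
    _ = 0 := by
      rw [mul_sub, ← mul_assoc, ← C_mul, mul_inv_cancel₀ hy, C_1, one_mul]; simp [r]

end MvPolynomial

namespace PropC

variable {K σ : Type*} [Field K] {d n : ℕ}

theorem eq_zero_of_sum_eq_aeval (hC : PropC σ K d n) (hd : 3 ≤ d) {S : Fin (n + 1) → Finset σ}
    (hdisj : Pairwise (onFun Disjoint S)) (hcard : ∀ j, (S j).card = d) {y : σ}
    {j₀ : Fin (n + 1)} (hy : y ∈ S j₀) {g : σ → MvPolynomial σ K} (hg : ∀ z, z ≠ y → g z = X z)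
    (hgy : (g y).IsHomogeneous 1) {bl : Fin n → MvPolynomial σ K}
    (hbl : ∀ i, ProdLinear d (bl i))
    (heq : ∑ i, bl i = ∑ j, aeval g (∏ x ∈ S j, (X x : MvPolynomial σ K))) :
    g y = 0 := by
  classical
  set S' := update S j₀ ((S j₀).erase y)
  have hS'card (j : Fin (n + 1)) : (S' j).card = if j = j₀ then d - 1 else d := by
    by_cases hj : j = j₀
    · subst hj; simp [S', Finset.card_erase_of_mem hy, hcard]
    · simp [S', hj, hcard]
  have hS'sub (j : Fin (n + 1)) : S' j ⊆ S j := by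
    by_cases hj : j = j₀
    · subst hj; simp [S', Finset.erase_subset]
    · simp [S', hj]
  obtain ⟨k, hk⟩ := hC S' (fun a b hab => (hdisj hab).mono (hS'sub a) (hS'sub b))
    (fun j => by rw [hS'card]; split_ifs <;> omega)
    (fun a b hab => by rw [hS'card, hS'card]; split_ifs <;> omega)
    bl hbl (Pi.mulSingle j₀ (g y))
    (fun j => by
      by_cases hj : j = j₀
      · subst hj
        rw [hS'card, if_pos rfl, Pi.mulSingle_eq_same, show d - (d - 1) = 1 by omega]
        exact .of_isHomogeneous hgy
      · rw [hS'card, if_neg hj, Pi.mulSingle_eq_of_ne hj, Nat.sub_self]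
        exact .one)
    (heq.trans (Finset.sum_congr rfl fun j _ => aeval_prod_X_eq_mulSingle_mul hdisj hy hg j))
  by_cases hk₀ : k = j₀
  · subst hk₀; simpa using hk
  · exact absurd hk (by simp [Pi.mulSingle_eq_of_ne hk₀])

theorem eq_C_mul_X_of_dvd (hC : PropC σ K d n) (hd : 3 ≤ d) {S : Fin (n + 1) → Finset σ}
    (hdisj : Pairwise (onFun Disjoint S)) (hcard : ∀ j, (S j).card = d)
    {bl : Fin (n + 1) → MvPolynomial σ K} (hbl : ∀ i, ProdLinear d (bl i))
    (heq : ∑ i, bl i = ∑ j, ∏ x ∈ S j, X x) {i₀ : Fin (n + 1)} {l : MvPolynomial σ K}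
    (hl : l.IsHomogeneous 1) (hdvd : l ∣ bl i₀) {y : σ}
    (hy : coeff (Finsupp.single y 1) l ≠ 0) : l = C (coeff (Finsupp.single y 1) l) * X y := by
  classical
  set c := coeff (Finsupp.single y 1) l
  set g := update X y (X y - C c⁻¹ * l)
  have hg (z : σ) (hz : z ≠ y) : g z = X z := update_of_ne hz _ _
  have hglin (z : σ) : (g z).IsHomogeneous 1 := by
    by_cases hz : z = y
    · subst hz; simpa [g] using (isHomogeneous_X K z).sub (hl.C_mul c⁻¹)
    · rw [hg z hz]; exact isHomogeneous_X K z
  have hkill : aeval g (bl i₀) = 0 :=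
    zero_dvd_iff.mp (aeval_update_X_sub_eq_zero hl hy ▸ map_dvd (aeval g) hdvd)
  have heq' : ∑ k, aeval g (bl (i₀.succAbove k)) =
      ∑ j, aeval g (∏ x ∈ S j, (X x : MvPolynomial σ K)) := by
    rw [← map_sum, ← map_sum, ← heq, Fin.sum_univ_succAbove _ i₀, map_add, hkill, zero_add]
  have hbl' (k : Fin n) := (hbl (i₀.succAbove k)).aeval hglin
  by_cases hyS : ∃ j, y ∈ S j
  · obtain ⟨j₀, hj₀⟩ := hyS
    have hgy := hC.eq_zero_of_sum_eq_aeval hd hdisj hcard hj₀ hg (hglin y) hbl' heq'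
    simp only [g, update_self, sub_eq_zero] at hgy
    rw [hgy, ← mul_assoc, ← C_mul, mul_inv_cancel₀ hy, C_1, one_mul]
  · -- `g` fixes every `x_j`; splitting `X z` off `x₀` makes `C^d_n` force `X z = 0`.
    push Not at hyS
    obtain ⟨z, hz⟩ : (S 0).Nonempty := Finset.card_pos.mp (by rw [hcard]; omega)
    refine absurd (hC.eq_zero_of_sum_eq_aeval hd hdisj hcard hz (fun _ _ => rfl)
      (isHomogeneous_X K z) hbl' (heq'.trans (Finset.sum_congr rfl fun j _ => ?_))) (X_ne_zero z)
    simp only [map_prod, aeval_X]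
    exact Finset.prod_congr rfl fun x hx => hg x fun h => hyS j (h ▸ hx)

theorem exists_eq_monomial (hC : PropC σ K d n) (hd : 3 ≤ d) {S : Fin (n + 1) → Finset σ}
    (hdisj : Pairwise (onFun Disjoint S)) (hcard : ∀ j, (S j).card = d)
    {bl : Fin (n + 1) → MvPolynomial σ K} (hbl : ∀ i, ProdLinear d (bl i))
    (heq : ∑ i, bl i = ∑ j, ∏ x ∈ S j, X x) (i : Fin (n + 1)) :
    ∃ D a, bl i = monomial D a := by
  obtain ⟨l, hl, hli⟩ := hbl i
  rw [hli]
  refine exists_prod_eq_monomial _ fun t _ => ?_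
  by_cases h0 : l t = 0
  · exact ⟨0, 0, by rw [h0, map_zero]⟩
  obtain ⟨y, hy⟩ := (hl t).exists_coeff_single_ne_zero h0
  have hdvd : l t ∣ bl i := hli ▸ Finset.dvd_prod_of_mem l (Finset.mem_univ t)
  exact ⟨_, _, (hC.eq_C_mul_X_of_dvd hd hdisj hcard hbl heq (hl t) hdvd hy).trans
    C_mul_X_eq_monomial⟩

end PropC

theorem stmt_8_general {K σ : Type*} [Field K] (d m : ℕ) (hd : 3 ≤ d) (hm : 1 ≤ m)
    (hC : PropC σ K d (m - 1))
    (S : Fin m → Finset σ) (hdisj : Pairwise (Function.onFun Disjoint S))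
    (hcard : ∀ i, (S i).card = d)
    (bl : Fin m → MvPolynomial σ K) (hbl : ∀ i, ProdLinear d (bl i))
    (heq : ∑ i, bl i = ∑ i, ∏ x ∈ S i, X x) :
    ∃ e : Equiv.Perm (Fin m), ∀ i, bl i = ∏ x ∈ S (e i), X x := by
  obtain ⟨n, rfl⟩ : ∃ n, m = n + 1 := ⟨m - 1, by omega⟩
  rw [Nat.add_sub_cancel] at hC
  have hSinj : Injective S := by
    intro i j hij
    by_contra hne
    have hdis : Disjoint (S i) (S j) := hdisj hne
    rw [hij, disjoint_self, Finset.bot_eq_empty, ← Finset.card_eq_zero, hcard] at hdis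
    omega
  have hmono := hC.exists_eq_monomial hd hdisj hcard hbl heq
  simp only [prod_X_eq_monomial] at heq ⊢
  exact exists_perm_of_sum_eq_sum_monomial_one hmono
    (Finsupp.sum_single_one_injective.comp hSinj) heq

theorem stmt_8 {K σ : Type*} [Field K] [IsAlgClosed K] (d m : ℕ) (hd : 3 ≤ d) (hm : 1 ≤ m)
    (hC : PropC σ K d (m - 1))
    (S : Fin m → Finset σ) (hdisj : Pairwise (Function.onFun Disjoint S))
    (hcard : ∀ i, (S i).card = d)
    (bl : Fin m → MvPolynomial σ K) (hbl : ∀ i, ProdLinear d (bl i))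
    (heq : ∑ i, bl i = ∑ i, ∏ x ∈ S i, X x) :
    ∃ e : Equiv.Perm (Fin m), ∀ i, bl i = ∏ x ∈ S (e i), X x :=
  stmt_8_general d m hd hm hC S hdisj hcard bl hbl heq
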